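/- Let (d_i)_{1≤i≤n} be a martingale difference sequence with respect to a filtration (F_i), with |d_i| ≤ 1 and E(d_i^2 | F_{i−1}) ≤ v almost surely for all i. Then for all λ > 0, P(max_{k ≤ n} |∑_{i=1}^k d_i| > λ) ≤ 2 exp(−λ^2/(2λ + 2nv)). -/

import Mathlib

/-!
For `0 ≤ t` and `|x| ≤ 1`, comparing power series gives `exp (t x) ≤ 1 + t x + ψ(t) x²` with
`ψ(t) = exp t - 1 - t`. For a martingale increment `d`, with `E[d | ℱ] = 0` and `E[d² | ℱ] ≤ v`,
this yields `E[exp (t d) | ℱ] ≤ exp (ψ(t) v)`, which iterates to `E exp (t fₙ) ≤ exp (ψ(t) n v)`;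
and `exp x ≥ 1 + x` gives `E[exp (t d) | ℱ] ≥ 1`, so `exp (t fₖ)` is a nonnegative submartingale.
Doob's maximal inequality then bounds `P(max_{k ≤ n} fₖ > λ)` by `exp (ψ(t) n v - t λ)`. Since
`ψ(t) ≤ t² / (2 (1 - t))` for `t < 1`, the choice `t = λ / (λ + n v)` turns the exponent into
`-λ² / (2 λ + 2 n v)`; the same bound for `-f` accounts for the factor 2.
-/

open MeasureTheory Real Finset
open scoped Nat

namespace Real

theorem hasSum_exp_sub_one_sub (x : ℝ) :
    HasSum (fun n : ℕ => x ^ (n + 2) / (n + 2)!) (exp x - 1 - x) := by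
  have := (hasSum_nat_add_iff' 2).mpr (NormedSpace.expSeries_div_hasSum_exp x)
  simpa [Finset.sum_range_succ, ← Real.exp_eq_exp_ℝ, sub_sub] using this

theorem exp_mul_le_one_add_mul_add_sq {t x : ℝ} (ht : 0 ≤ t) (hx : |x| ≤ 1) :
    exp (t * x) ≤ 1 + t * x + (exp t - 1 - t) * x ^ 2 := by
  suffices exp (t * x) - 1 - t * x ≤ (exp t - 1 - t) * x ^ 2 by linarith
  refine hasSum_le (fun n => ?_) (hasSum_exp_sub_one_sub (t * x))
    ((hasSum_exp_sub_one_sub t).mul_right (x ^ 2))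
  rw [div_mul_eq_mul_div]
  gcongr
  calc (t * x) ^ (n + 2) ≤ t ^ (n + 2) * |x| ^ (n + 2) :=
        (le_abs_self _).trans_eq (by rw [abs_pow, abs_mul, abs_of_nonneg ht, mul_pow])
    _ ≤ t ^ (n + 2) * |x| ^ 2 :=
        mul_le_mul_of_nonneg_left (pow_le_pow_of_le_one (abs_nonneg x) hx (by omega))
          (by positivity)
    _ = t ^ (n + 2) * x ^ 2 := by rw [sq_abs]

theorem exp_sub_one_sub_le_sq_div {t : ℝ} (ht0 : 0 ≤ t) (ht1 : t < 1) :
    exp t - 1 - t ≤ t ^ 2 / (2 * (1 - t)) := by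
  have hgeom := (hasSum_geometric_of_lt_one ht0 ht1).mul_left (t ^ 2 / 2)
  have hval : t ^ 2 / 2 * (1 - t)⁻¹ = t ^ 2 / (2 * (1 - t)) := by field_simp
  refine hval ▸ hasSum_le (fun n => ?_) (hasSum_exp_sub_one_sub t) hgeom
  have h2 : (2 : ℝ) ≤ (n + 2)! := by exact_mod_cast le_add_self.trans (n + 2).self_le_factorial
  calc t ^ (n + 2) / (n + 2)! ≤ t ^ (n + 2) / 2 := by gcongr
    _ = t ^ 2 / 2 * t ^ n := by ring

end Real

theorem exists_pos_sq_div_le_mul_sub {lam c : ℝ} (hlam : 0 < lam) (hc : 0 ≤ c) :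
    ∃ t > 0, lam ^ 2 / (2 * lam + 2 * c) ≤ t * lam - (exp t - 1 - t) * c := by
  rcases hc.eq_or_lt with rfl | hc
  · refine ⟨1, one_pos, ?_⟩
    rw [div_le_iff₀ (by positivity)]
    nlinarith
  refine ⟨lam / (lam + c), by positivity, ?_⟩
  have ht1 : lam / (lam + c) < 1 := (div_lt_one (by positivity)).2 (by linarith)
  have hψ := mul_le_mul_of_nonneg_right
    (Real.exp_sub_one_sub_le_sq_div (by positivity) ht1) hc.le
  have hval : lam / (lam + c) * lam - (lam / (lam + c)) ^ 2 / (2 * (1 - lam / (lam + c))) * c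
      = lam ^ 2 / (2 * lam + 2 * c) := by
    field_simp [hc.ne']
    ring
  linarith

namespace MeasureTheory

section CondExp

variable {Ω : Type*} {m m0 : MeasurableSpace Ω} {μ : Measure Ω} [IsFiniteMeasure μ] {d : Ω → ℝ}

theorem integrable_exp_mul_of_abs_le (hd : AEStronglyMeasurable d μ) {C : ℝ}
    (hbdd : ∀ᵐ ω ∂μ, |d ω| ≤ C) (t : ℝ) : Integrable (fun ω => exp (t * d ω)) μ := by
  refine .of_bound (continuous_exp.comp_aestronglyMeasurable (hd.const_mul t)) (exp (|t| * C)) ?_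
  filter_upwards [hbdd] with ω hω
  rw [norm_of_nonneg (exp_nonneg _), exp_le_exp]
  calc t * d ω ≤ |t * d ω| := le_abs_self _
    _ = |t| * |d ω| := abs_mul t (d ω)
    _ ≤ |t| * C := by gcongr

theorem condExp_one_add_mul_ae_eq_one (hm : m ≤ m0) (hd : Integrable d μ)
    (hd0 : μ[d|m] =ᵐ[μ] 0) (t : ℝ) : μ[fun ω => 1 + t * d ω|m] =ᵐ[μ] 1 := by
  have hsmul : μ[fun ω => t * d ω|m] =ᵐ[μ] fun ω => t * μ[d|m] ω := condExp_smul t d m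
  filter_upwards [condExp_add (integrable_const 1) (hd.const_mul t) m, hsmul, hd0]
    with ω hadd hsmul hd0
  change μ[(fun _ => (1 : ℝ)) + fun ω => t * d ω|m] ω = 1
  rw [hadd, Pi.add_apply, condExp_const hm, hsmul, hd0]
  simp

theorem one_le_condExp_exp_mul (hm : m ≤ m0) (hd : Integrable d μ) (hbdd : ∀ᵐ ω ∂μ, |d ω| ≤ 1)
    (hd0 : μ[d|m] =ᵐ[μ] 0) (t : ℝ) : ∀ᵐ ω ∂μ, 1 ≤ μ[fun ω => exp (t * d ω)|m] ω := by
  have hmono := condExp_mono (m := m) ((integrable_const 1).add (hd.const_mul t))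
    (integrable_exp_mul_of_abs_le hd.aestronglyMeasurable hbdd t)
    (ae_of_all _ fun ω => (add_comm _ _).trans_le (add_one_le_exp (t * d ω)))
  filter_upwards [hmono, condExp_one_add_mul_ae_eq_one hm hd hd0 t] with ω hmono hone
  exact hone.symm.le.trans hmono

theorem condExp_exp_mul_le (hm : m ≤ m0) (hd : Integrable d μ) (hbdd : ∀ᵐ ω ∂μ, |d ω| ≤ 1)
    (hd0 : μ[d|m] =ᵐ[μ] 0) {v : ℝ} (hvar : ∀ᵐ ω ∂μ, μ[fun ω => d ω ^ 2|m] ω ≤ v) {t : ℝ}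
    (ht : 0 ≤ t) : ∀ᵐ ω ∂μ, μ[fun ω => exp (t * d ω)|m] ω ≤ exp ((exp t - 1 - t) * v) := by
  set ψ := exp t - 1 - t
  have hψ : 0 ≤ ψ := by linarith [add_one_le_exp t]
  have hd2 : Integrable (fun ω => d ω ^ 2) μ := .of_bound (hd.aestronglyMeasurable.pow 2) 1 <| by
    filter_upwards [hbdd] with ω hω
    simpa using hω
  have hmono := condExp_mono (m := m) (integrable_exp_mul_of_abs_le hd.aestronglyMeasurable hbdd t)
    (((integrable_const 1).add (hd.const_mul t)).add (hd2.const_mul ψ))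
    (by filter_upwards [hbdd] with ω hω using Real.exp_mul_le_one_add_mul_add_sq ht hω)
  have hsmul : μ[fun ω => ψ * d ω ^ 2|m] =ᵐ[μ] fun ω => ψ * μ[fun ω => d ω ^ 2|m] ω :=
    condExp_smul ψ _ m
  filter_upwards [hmono,
    condExp_add ((integrable_const 1).add (hd.const_mul t)) (hd2.const_mul ψ) m,
    condExp_one_add_mul_ae_eq_one hm hd hd0 t, hsmul, hvar] with ω hmono hadd hone hsmul hvar
  calc μ[fun ω => exp (t * d ω)|m] ω
      ≤ μ[fun ω => 1 + t * d ω|m] ω + μ[fun ω => ψ * d ω ^ 2|m] ω := hmono.trans_eq hadd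
    _ ≤ 1 + ψ * v := by rw [hone, hsmul, Pi.one_apply]; gcongr
    _ ≤ exp (ψ * v) := by linarith [add_one_le_exp (ψ * v)]

end CondExp

section BoundedIncrements

variable {Ω : Type*} {m0 : MeasurableSpace Ω} {μ : Measure Ω} {ℱ : Filtration ℕ m0}
  {f : ℕ → Ω → ℝ}

theorem Martingale.condExp_sub_ae_eq_zero (hf : Martingale f ℱ μ) (i : ℕ) :
    μ[fun ω => f (i + 1) ω - f i ω|ℱ i] =ᵐ[μ] 0 := by
  filter_upwards [condExp_sub (hf.integrable (i + 1)) (hf.integrable i) (ℱ i),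
    hf.condExp_ae_eq i.le_succ, hf.condExp_ae_eq le_rfl] with ω hsub hsucc hself
  change μ[f (i + 1) - f i|ℱ i] ω = 0
  rw [hsub, Pi.sub_apply, hsucc, hself, sub_self]

theorem ae_abs_le_of_abs_sub_le_one (hf0 : ∀ ω, f 0 ω = 0)
    (hbdd : ∀ i, ∀ᵐ ω ∂μ, |f (i + 1) ω - f i ω| ≤ 1) (k : ℕ) : ∀ᵐ ω ∂μ, |f k ω| ≤ k := by
  induction k with
  | zero => simp [hf0]
  | succ k ih =>
    filter_upwards [ih, hbdd k] with ω hk hstep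
    push_cast
    linarith [abs_sub_abs_le_abs_sub (f (k + 1) ω) (f k ω)]

variable [IsFiniteMeasure μ]

theorem integrable_exp_mul_of_abs_sub_le_one (hf : StronglyAdapted ℱ f) (hf0 : ∀ ω, f 0 ω = 0)
    (hbdd : ∀ i, ∀ᵐ ω ∂μ, |f (i + 1) ω - f i ω| ≤ 1) (t : ℝ) (k : ℕ) :
    Integrable (fun ω => exp (t * f k ω)) μ :=
  integrable_exp_mul_of_abs_le ((hf k).mono (ℱ.le k)).aestronglyMeasurable
    (ae_abs_le_of_abs_sub_le_one hf0 hbdd k) t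

theorem Martingale.condExp_exp_mul_succ_ae_eq (hf : Martingale f ℱ μ) (hf0 : ∀ ω, f 0 ω = 0)
    (hbdd : ∀ i, ∀ᵐ ω ∂μ, |f (i + 1) ω - f i ω| ≤ 1) (t : ℝ) (i : ℕ) :
    μ[fun ω => exp (t * f (i + 1) ω)|ℱ i] =ᵐ[μ]
      fun ω => exp (t * f i ω) * μ[fun ω => exp (t * (f (i + 1) ω - f i ω))|ℱ i] ω := by
  have hsplit : (fun ω => exp (t * f (i + 1) ω)) =
      (fun ω => exp (t * f i ω)) * fun ω => exp (t * (f (i + 1) ω - f i ω)) := by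
    funext ω
    rw [Pi.mul_apply, ← exp_add]
    ring_nf
  rw [hsplit]
  refine condExp_mul_of_stronglyMeasurable_left
    (continuous_exp.comp_stronglyMeasurable ((hf.stronglyAdapted i).const_mul t)) ?_
    (integrable_exp_mul_of_abs_le (((hf.integrable _).sub (hf.integrable _)).1) (hbdd i) t)
  exact hsplit ▸ integrable_exp_mul_of_abs_sub_le_one hf.stronglyAdapted hf0 hbdd t (i + 1)

theorem Martingale.submartingale_exp_mul (hf : Martingale f ℱ μ) (hf0 : ∀ ω, f 0 ω = 0)
    (hbdd : ∀ i, ∀ᵐ ω ∂μ, |f (i + 1) ω - f i ω| ≤ 1) (t : ℝ) :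
    Submartingale (fun k ω => exp (t * f k ω)) ℱ μ := by
  refine submartingale_nat
    (fun k => continuous_exp.comp_stronglyMeasurable ((hf.stronglyAdapted k).const_mul t))
    (integrable_exp_mul_of_abs_sub_le_one hf.stronglyAdapted hf0 hbdd t) fun i => ?_
  filter_upwards [hf.condExp_exp_mul_succ_ae_eq hf0 hbdd t i,
    one_le_condExp_exp_mul (ℱ.le i) ((hf.integrable _).sub (hf.integrable _)) (hbdd i)
      (hf.condExp_sub_ae_eq_zero i) t] with ω hsucc hone
  rw [hsucc]
  exact le_mul_of_one_le_right (exp_nonneg _) hone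

theorem Martingale.integral_exp_mul_le [IsProbabilityMeasure μ] (hf : Martingale f ℱ μ)
    (hf0 : ∀ ω, f 0 ω = 0) (hbdd : ∀ i, ∀ᵐ ω ∂μ, |f (i + 1) ω - f i ω| ≤ 1) {v : ℝ}
    (hvar : ∀ i, ∀ᵐ ω ∂μ, μ[fun ω' => (f (i + 1) ω' - f i ω') ^ 2|ℱ i] ω ≤ v)
    {t : ℝ} (ht : 0 ≤ t) (n : ℕ) :
    ∫ ω, exp (t * f n ω) ∂μ ≤ exp ((exp t - 1 - t) * (n * v)) := by
  induction n with
  | zero => simp [hf0]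
  | succ k ih =>
    have hint := integrable_exp_mul_of_abs_sub_le_one hf.stronglyAdapted hf0 hbdd t
    calc ∫ ω, exp (t * f (k + 1) ω) ∂μ = ∫ ω, μ[fun ω => exp (t * f (k + 1) ω)|ℱ k] ω ∂μ :=
          (integral_condExp (ℱ.le k)).symm
      _ ≤ ∫ ω, exp (t * f k ω) * exp ((exp t - 1 - t) * v) ∂μ := by
          refine integral_mono_ae integrable_condExp ((hint k).mul_const _) ?_
          filter_upwards [hf.condExp_exp_mul_succ_ae_eq hf0 hbdd t k,
            condExp_exp_mul_le (ℱ.le k) ((hf.integrable _).sub (hf.integrable _)) (hbdd k)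
              (hf.condExp_sub_ae_eq_zero k) (hvar k) ht] with ω hsucc hle
          rw [hsucc]
          exact mul_le_mul_of_nonneg_left hle (exp_nonneg _)
      _ ≤ exp ((exp t - 1 - t) * (k * v)) * exp ((exp t - 1 - t) * v) := by
          rw [integral_mul_const]
          gcongr
      _ = exp ((exp t - 1 - t) * ((k + 1 : ℕ) * v)) := by
          rw [← exp_add]
          push_cast
          ring_nf

theorem Martingale.measure_exists_lt_le [IsProbabilityMeasure μ] (hf : Martingale f ℱ μ)
    (hf0 : ∀ ω, f 0 ω = 0) (hbdd : ∀ i, ∀ᵐ ω ∂μ, |f (i + 1) ω - f i ω| ≤ 1) {v : ℝ}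
    (hvar : ∀ i, ∀ᵐ ω ∂μ, μ[fun ω' => (f (i + 1) ω' - f i ω') ^ 2|ℱ i] ω ≤ v)
    {t : ℝ} (ht : 0 ≤ t) (lam : ℝ) (n : ℕ) :
    μ {ω | ∃ k ≤ n, lam < f k ω} ≤
      ENNReal.ofReal (exp ((exp t - 1 - t) * (n * v) - t * lam)) := by
  set ε := (exp (t * lam)).toNNReal
  have hε : (ε : ℝ) = exp (t * lam) := coe_toNNReal _ (exp_pos _).le
  set B := {ω | (ε : ℝ) ≤ (range (n + 1)).sup' nonempty_range_add_one
    fun k => exp (t * f k ω)}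
  have hsub : {ω | ∃ k ≤ n, lam < f k ω} ⊆ B := by
    rintro ω ⟨k, hk, hlt⟩
    refine le_sup'_of_le (fun k => exp (t * f k ω)) (mem_range.2 (Nat.lt_succ_of_le hk)) ?_
    rw [hε]
    gcongr
  have hdoob : ε * μ B ≤ ENNReal.ofReal (exp ((exp t - 1 - t) * (n * v))) := by
    refine (maximal_ineq (hf.submartingale_exp_mul hf0 hbdd t) (fun k ω => (exp_pos _).le) n).trans
      (ENNReal.ofReal_le_ofReal ?_)
    exact (setIntegral_le_integral
      (integrable_exp_mul_of_abs_sub_le_one hf.stronglyAdapted hf0 hbdd t n)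
      (ae_of_all _ fun ω => (exp_pos _).le)).trans (hf.integral_exp_mul_le hf0 hbdd hvar ht n)
  calc μ {ω | ∃ k ≤ n, lam < f k ω} ≤ μ B := measure_mono hsub
    _ = ENNReal.ofReal (exp (-(t * lam))) * (ε * μ B) := by
      rw [← mul_assoc, ← ENNReal.ofReal_coe_nnreal, ← ENNReal.ofReal_mul (exp_pos _).le]
      rw [hε, ← exp_add, neg_add_cancel, exp_zero, ENNReal.ofReal_one, one_mul]
    _ ≤ ENNReal.ofReal (exp (-(t * lam))) * ENNReal.ofReal (exp ((exp t - 1 - t) * (n * v))) := by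
      gcongr
    _ = ENNReal.ofReal (exp ((exp t - 1 - t) * (n * v) - t * lam)) := by
      rw [← ENNReal.ofReal_mul (exp_pos _).le, ← exp_add, neg_add_eq_sub]

end BoundedIncrements

end MeasureTheory

theorem stmt_10 {Ω : Type*} {m0 : MeasurableSpace Ω} (μ : Measure Ω) [IsProbabilityMeasure μ]
    (ℱ : Filtration ℕ m0) (f : ℕ → Ω → ℝ) (hf : Martingale f ℱ μ)
    (hf0 : ∀ ω, f 0 ω = 0) (n : ℕ) (v : ℝ) (hv : 0 ≤ v)
    (hbdd : ∀ i, ∀ᵐ ω ∂μ, |f (i + 1) ω - f i ω| ≤ 1)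
    (hvar : ∀ i, ∀ᵐ ω ∂μ,
      (μ[fun ω' => (f (i + 1) ω' - f i ω') ^ 2 | ℱ i]) ω ≤ v)
    (lam : ℝ) (hlam : 0 < lam) :
    μ {ω | ∃ k ≤ n, lam < |f k ω|}
      ≤ ENNReal.ofReal (2 * Real.exp (-lam ^ 2 / (2 * lam + 2 * n * v))) := by
  obtain ⟨t, ht, hrate⟩ := exists_pos_sq_div_le_mul_sub hlam (by positivity : (0 : ℝ) ≤ n * v)
  have hneg : μ {ω | ∃ k ≤ n, lam < -f k ω} ≤
      ENNReal.ofReal (exp ((exp t - 1 - t) * (n * v) - t * lam)) :=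
    hf.neg.measure_exists_lt_le (by simpa using hf0)
      (by simpa [neg_add_eq_sub, abs_sub_comm] using hbdd)
      (by simpa [neg_add_eq_sub, sub_sq_comm] using hvar) ht.le lam n
  have hsplit : {ω | ∃ k ≤ n, lam < |f k ω|} ⊆
      {ω | ∃ k ≤ n, lam < f k ω} ∪ {ω | ∃ k ≤ n, lam < -f k ω} := by
    rintro ω ⟨k, hk, hlt⟩
    rcases lt_abs.1 hlt with h | h
    exacts [Or.inl ⟨k, hk, h⟩, Or.inr ⟨k, hk, h⟩]
  calc μ {ω | ∃ k ≤ n, lam < |f k ω|}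
      ≤ μ {ω | ∃ k ≤ n, lam < f k ω} + μ {ω | ∃ k ≤ n, lam < -f k ω} :=
        (measure_mono hsplit).trans (measure_union_le _ _)
    _ ≤ ENNReal.ofReal (2 * exp ((exp t - 1 - t) * (n * v) - t * lam)) := by
        rw [two_mul, ENNReal.ofReal_add (exp_pos _).le (exp_pos _).le]
        exact add_le_add (hf.measure_exists_lt_le hf0 hbdd hvar ht.le lam n) hneg
    _ ≤ ENNReal.ofReal (2 * exp (-lam ^ 2 / (2 * lam + 2 * n * v))) := by
        gcongr
        rw [neg_div, mul_assoc]
        linarith
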